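/- For a connected weighted graph G with Laplacian L, volume V_G = sum of all degrees, and Moore–Penrose pseudoinverse L^+, the commute time satisfies c(i,j) = V_G * (e_i - e_j)^T L^+ (e_i - e_j), where e_i is the i-th standard basis vector. -/

import Mathlib

open Matrix BigOperators

/-- Probability that the random walk with transition probabilities `p`,
started at `i`, reaches `j` for the first time in exactly `t` steps. -/
noncomputable def hitProb {n : ℕ} (p : Fin n → Fin n → ℝ) : ℕ → Fin n → Fin n → ℝ
  | 0, i, j => if i = j then 1 else 0
  | t + 1, i, j => if i = j then 0 else ∑ l, p i l * hitProb p t l j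

/-- Expected first-hitting time of `j` from `i`. -/
noncomputable def hittingTime {n : ℕ} (p : Fin n → Fin n → ℝ) (i j : Fin n) : ℝ :=
  ∑' t : ℕ, (t : ℝ) * hitProb p t i j

/-!
Fix the target `j` and let `h k` be the expected hitting time of `j` from `k`. First-step
analysis gives `h j = 0` and `h k = 1 + ∑ l, p k l * h l` for `k ≠ j`; multiplied by `d k` this
says `(L h) k = d k` off `j`, and since the entries of `L h` sum to zero, `L h = d - V_G • e_j`.
The quadratic form of `L` is `½ ∑ w k l (x k - x l)²`, so on a connected graph its kernel
consists of the constant vectors, and any `G` with `L G L = L` recovers `h` up to a constant: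
`h i - h j = (G L h) i - (G L h) j`. Adding the hitting times in both directions, the `d`-terms
cancel and `c i j = V_G (e_i - e_j)ᵀ G (e_i - e_j)`.

Summing by parts, `h i = ∑ t, P(the walk from i has not visited j by time t)`, and these
probabilities decay geometrically because, by connectivity, from every start the walk reaches `j`
within a bounded time with positive probability; first-step analysis is then read off this series.
-/

open Filter Topology

/-- Probability that the walk started at `i` has not visited `j` during the steps `0, …, t`. -/
noncomputable def survProb {n : ℕ} (p : Fin n → Fin n → ℝ) (j : Fin n) : ℕ → Fin n → ℝ
  | 0, i => if i = j then 0 else 1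
  | t + 1, i => if i = j then 0 else ∑ l, p i l * survProb p j t l

theorem le_geometric_of_le_mul_shift {a : ℕ → ℝ} {N : ℕ} {θ : ℝ} (hN : 0 < N) (hθ : 0 < θ)
    (hθ1 : θ ≤ 1) (ha : ∀ t, a t ≤ 1) (hstep : ∀ t, a (t + N) ≤ θ * a t) (t : ℕ) :
    a t ≤ θ⁻¹ * (θ ^ (N⁻¹ : ℝ)) ^ t := by
  set ρ := θ ^ (N⁻¹ : ℝ)
  have hρ0 : 0 ≤ ρ := by positivity
  have hρ1 : ρ ≤ 1 := Real.rpow_le_one hθ.le hθ1 (by positivity)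
  have hρN : ρ ^ N = θ := Real.rpow_inv_natCast_pow hθ.le hN.ne'
  induction t using Nat.strong_induction_on with
  | _ t ih =>
    obtain ht | ⟨s, rfl⟩ : t < N ∨ ∃ s, t = s + N :=
      (lt_or_ge t N).imp_right fun h => ⟨t - N, by omega⟩
    · calc a t ≤ θ⁻¹ * ρ ^ N := by rw [hρN, inv_mul_cancel₀ hθ.ne']; exact ha t
        _ ≤ θ⁻¹ * ρ ^ t := by gcongr θ⁻¹ * ?_; exact pow_le_pow_of_le_one hρ0 hρ1 ht.le
    · calc a (s + N) ≤ θ * (θ⁻¹ * ρ ^ s) := (hstep s).trans (by gcongr; exact ih s (by omega))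
        _ = θ⁻¹ * ρ ^ (s + N) := by rw [pow_add, hρN]; field_simp

namespace survProb

variable {n : ℕ} {p : Fin n → Fin n → ℝ} {j : Fin n}

@[simp]
theorem apply_self (t : ℕ) : survProb p j t j = 0 := by
  cases t <;> simp [survProb]

theorem zero_of_ne {i : Fin n} (hi : i ≠ j) : survProb p j 0 i = 1 := by
  simp [survProb, hi]

theorem succ_of_ne {i : Fin n} (hi : i ≠ j) (t : ℕ) :
    survProb p j (t + 1) i = ∑ l, p i l * survProb p j t l := by
  simp [survProb, hi]

theorem nonneg (hp0 : ∀ i l, 0 ≤ p i l) (t : ℕ) (i : Fin n) : 0 ≤ survProb p j t i := by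
  induction t generalizing i with
  | zero => unfold survProb; split <;> norm_num
  | succ t ih =>
    unfold survProb; split
    · rfl
    · exact Finset.sum_nonneg fun l _ => mul_nonneg (hp0 i l) (ih l)

theorem le_one (hp0 : ∀ i l, 0 ≤ p i l) (hp1 : ∀ i, ∑ l, p i l = 1) (t : ℕ) (i : Fin n) :
    survProb p j t i ≤ 1 := by
  induction t generalizing i with
  | zero => unfold survProb; split <;> norm_num
  | succ t ih =>
    unfold survProb; split
    · norm_num
    · calc ∑ l, p i l * survProb p j t l ≤ ∑ l, p i l :=
            Finset.sum_le_sum fun l _ => mul_le_of_le_one_right (hp0 i l) (ih l)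
        _ = 1 := hp1 i

/-- Not having hit `j` during `s + t` steps requires not having hit it during the first `s`
steps and then, from wherever the walk is, during `t` more. -/
theorem add_le_mul (hp0 : ∀ i l, 0 ≤ p i l) {t : ℕ} {C : ℝ} (hC : ∀ l, survProb p j t l ≤ C)
    (s : ℕ) (i : Fin n) : survProb p j (s + t) i ≤ survProb p j s i * C := by
  induction s generalizing i with
  | zero =>
    by_cases hi : i = j
    · subst hi; simp
    · simpa [zero_of_ne hi] using hC i
  | succ s ih =>
    by_cases hi : i = j
    · subst hi; simp
    · rw [Nat.add_right_comm, succ_of_ne hi, succ_of_ne hi, Finset.sum_mul]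
      exact Finset.sum_le_sum fun l _ => by
        rw [mul_assoc]; exact mul_le_mul_of_nonneg_left (ih l) (hp0 i l)

theorem antitone (hp0 : ∀ i l, 0 ≤ p i l) (hp1 : ∀ i, ∑ l, p i l = 1) (i : Fin n) :
    Antitone fun t => survProb p j t i :=
  antitone_nat_of_succ_le fun t => by
    simpa using add_le_mul hp0 (le_one hp0 hp1 1) t i

theorem exists_lt_one (hp0 : ∀ i l, 0 ≤ p i l) (hp1 : ∀ i, ∑ l, p i l = 1) {i : Fin n}
    (hi : Relation.ReflTransGen (fun a b => 0 < p a b) i j) : ∃ t, survProb p j t i < 1 := by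
  induction hi using Relation.ReflTransGen.head_induction_on with
  | refl => exact ⟨0, by simp⟩
  | @head a b hab _ ih =>
    obtain ⟨t, ht⟩ := ih
    by_cases ha : a = j
    · exact ⟨0, by simp [ha]⟩
    refine ⟨t + 1, ?_⟩
    have hgap : p a b * (1 - survProb p j t b) ≤ ∑ l, p a l * (1 - survProb p j t l) :=
      Finset.single_le_sum (f := fun l => p a l * (1 - survProb p j t l))
        (fun l _ => mul_nonneg (hp0 a l) (sub_nonneg.2 (le_one hp0 hp1 t l)))
        (Finset.mem_univ b)
    have hsum : ∑ l, p a l * (1 - survProb p j t l) = 1 - survProb p j (t + 1) a := by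
      simp only [succ_of_ne ha, mul_sub, mul_one, Finset.sum_sub_distrib, hp1]
    nlinarith [mul_pos hab (sub_pos.2 ht)]

theorem exists_le_geometric (hp0 : ∀ i l, 0 ≤ p i l) (hp1 : ∀ i, ∑ l, p i l = 1)
    (hreach : ∀ i, Relation.ReflTransGen (fun a b => 0 < p a b) i j) :
    ∃ C ρ : ℝ, 0 ≤ ρ ∧ ρ < 1 ∧ ∀ t i, survProb p j t i ≤ C * ρ ^ t := by
  choose T hT using fun i => exists_lt_one hp0 hp1 (hreach i)
  set N := Finset.univ.sup T + 1
  have hN : 0 < N := Nat.succ_pos _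
  have hlt : ∀ i, survProb p j N i < 1 := fun i =>
    (antitone hp0 hp1 i (Nat.le_succ_of_le (Finset.le_sup (Finset.mem_univ i)))).trans_lt (hT i)
  have : Nonempty (Fin n) := ⟨j⟩
  obtain ⟨i₀, hi₀⟩ := Finite.exists_max fun i => survProb p j N i
  -- positive, so that `θ ^ (1 / N)` is a true per-step rate
  set θ := max (survProb p j N i₀) (1 / 2)
  have hθ : 0 < θ := lt_max_of_lt_right (by norm_num)
  have hθ1 : θ < 1 := max_lt (hlt i₀) (by norm_num)
  refine ⟨θ⁻¹, θ ^ (N⁻¹ : ℝ), by positivity, Real.rpow_lt_one hθ.le hθ1 (by positivity),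
    fun t i => le_geometric_of_le_mul_shift hN hθ hθ1.le (le_one hp0 hp1 · i) (fun s => ?_) t⟩
  rw [mul_comm]
  exact add_le_mul hp0 (fun l => (hi₀ l).trans (le_max_left _ _)) s i

theorem summable (hp0 : ∀ i l, 0 ≤ p i l) (hp1 : ∀ i, ∑ l, p i l = 1)
    (hreach : ∀ i, Relation.ReflTransGen (fun a b => 0 < p a b) i j) (i : Fin n) :
    Summable fun t => survProb p j t i :=
  let ⟨C, _, hρ0, hρ1, hC⟩ := exists_le_geometric hp0 hp1 hreach
  .of_nonneg_of_le (nonneg hp0 · i) (hC · i) ((summable_geometric_of_lt_one hρ0 hρ1).mul_left C)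

end survProb

section HittingTime

variable {n : ℕ} {p : Fin n → Fin n → ℝ} {j : Fin n}

theorem hitProb_succ_eq_sub (hp1 : ∀ i, ∑ l, p i l = 1) (t : ℕ) (i : Fin n) :
    hitProb p (t + 1) i j = survProb p j t i - survProb p j (t + 1) i := by
  induction t generalizing i with
  | zero =>
    by_cases hi : i = j
    · subst hi; simp [hitProb]
    have h0 : ∀ l, hitProb p 0 l j = 1 - survProb p j 0 l := fun l => by
      by_cases hl : l = j <;> simp [hitProb, survProb, hl]
    rw [hitProb, if_neg hi, survProb.zero_of_ne hi, survProb.succ_of_ne hi]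
    simp only [h0, mul_sub, mul_one, Finset.sum_sub_distrib, hp1]
  | succ t ih =>
    by_cases hi : i = j
    · subst hi; simp [hitProb]
    rw [hitProb, if_neg hi, survProb.succ_of_ne hi, survProb.succ_of_ne hi]
    simp only [ih, mul_sub, Finset.sum_sub_distrib]

theorem sum_range_mul_hitProb (hp1 : ∀ i, ∑ l, p i l = 1) (i : Fin n) (m : ℕ) :
    ∑ t ∈ Finset.range (m + 1), (t : ℝ) * hitProb p t i j
      = ∑ t ∈ Finset.range (m + 1), survProb p j t i - (m + 1) * survProb p j m i := by
  induction m with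
  | zero => simp
  | succ m ih =>
    rw [Finset.sum_range_succ (fun t : ℕ => (t : ℝ) * hitProb p t i j) (m + 1), ih,
      Finset.sum_range_succ (fun t => survProb p j t i) (m + 1), hitProb_succ_eq_sub hp1]
    push_cast
    ring

theorem hasSum_mul_hitProb (hp0 : ∀ i l, 0 ≤ p i l) (hp1 : ∀ i, ∑ l, p i l = 1)
    (hreach : ∀ i, Relation.ReflTransGen (fun a b => 0 < p a b) i j) (i : Fin n) :
    HasSum (fun t : ℕ => (t : ℝ) * hitProb p t i j) (∑' t, survProb p j t i) := by
  obtain ⟨C, ρ, hρ0, hρ1, hC⟩ := survProb.exists_le_geometric hp0 hp1 hreach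
  have hdecay : Tendsto (fun m : ℕ => ((m : ℝ) + 1) * survProb p j m i) atTop (𝓝 0) := by
    have hlim : Tendsto (fun m : ℕ => C * ((m : ℝ) * ρ ^ m + ρ ^ m)) atTop (𝓝 0) := by
      simpa using ((tendsto_self_mul_const_pow_of_lt_one hρ0 hρ1).add
        (tendsto_pow_atTop_nhds_zero_of_lt_one hρ0 hρ1)).const_mul C
    refine squeeze_zero (fun m => mul_nonneg (by positivity) (survProb.nonneg hp0 m i))
      (fun m => ?_) hlim
    calc ((m : ℝ) + 1) * survProb p j m i ≤ ((m : ℝ) + 1) * (C * ρ ^ m) := by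
          gcongr; exact hC m i
      _ = C * ((m : ℝ) * ρ ^ m + ρ ^ m) := by ring
  have hnonneg : ∀ t : ℕ, 0 ≤ (t : ℝ) * hitProb p t i j := by
    rintro (_ | t)
    · simp
    · rw [hitProb_succ_eq_sub hp1]
      exact mul_nonneg (Nat.cast_nonneg _) (sub_nonneg.2 (survProb.antitone hp0 hp1 i t.le_succ))
  rw [hasSum_iff_tendsto_nat_of_nonneg hnonneg, ← tendsto_add_atTop_iff_nat 1]
  have hpartial := (survProb.summable hp0 hp1 hreach i).hasSum.tendsto_sum_nat.comp
    (tendsto_add_atTop_nat 1)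
  simpa [sum_range_mul_hitProb hp1] using hpartial.sub hdecay

theorem hittingTime_self : hittingTime p j j = 0 := by
  have : ∀ t : ℕ, (t : ℝ) * hitProb p t j j = 0 := by
    rintro (_ | t) <;> simp [hitProb]
  simp [hittingTime, this]

theorem hittingTime_eq_one_add (hp0 : ∀ i l, 0 ≤ p i l) (hp1 : ∀ i, ∑ l, p i l = 1)
    (hreach : ∀ i, Relation.ReflTransGen (fun a b => 0 < p a b) i j) {i : Fin n} (hi : i ≠ j) :
    hittingTime p i j = 1 + ∑ l, p i l * hittingTime p l j := by
  have hT : ∀ l, hittingTime p l j = ∑' t, survProb p j t l := fun l =>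
    (hasSum_mul_hitProb hp0 hp1 hreach l).tsum_eq
  have hsumm : ∀ l, Summable fun t => survProb p j t l := fun l =>
    survProb.summable hp0 hp1 hreach l
  rw [hT i, (hsumm i).tsum_eq_zero_add, survProb.zero_of_ne hi]
  simp only [survProb.succ_of_ne hi, hT]
  rw [Summable.tsum_finsetSum fun l _ => (hsumm l).mul_left (p i l)]
  simp only [tsum_mul_left]

end HittingTime

section Laplacian

variable {ι : Type*} [Fintype ι] [DecidableEq ι] {w : ι → ι → ℝ} {d : ι → ℝ}

theorem laplacian_mulVec_apply (x : ι → ℝ) (k : ι) :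
    ((diagonal d - of w) *ᵥ x) k = d k * x k - ∑ l, w k l * x l := by
  rw [sub_mulVec, Pi.sub_apply, mulVec_diagonal]
  rfl

theorem sum_laplacian_mulVec (hsymm : ∀ i j, w i j = w j i) (hd : ∀ i, d i = ∑ j, w i j)
    (x : ι → ℝ) : ∑ k, ((diagonal d - of w) *ᵥ x) k = 0 := by
  simp only [laplacian_mulVec_apply, Finset.sum_sub_distrib, hd, Finset.sum_mul]
  rw [Finset.sum_comm]
  simp only [hsymm, sub_self]

theorem dotProduct_laplacian_mulVec (hsymm : ∀ i j, w i j = w j i) (hd : ∀ i, d i = ∑ j, w i j)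
    (x : ι → ℝ) :
    x ⬝ᵥ ((diagonal d - of w) *ᵥ x) = (∑ k, ∑ l, w k l * (x k - x l) ^ 2) / 2 := by
  have hswap : ∑ k, ∑ l, w k l * x l ^ 2 = ∑ k, ∑ l, w k l * x k ^ 2 := by
    rw [Finset.sum_comm]; simp only [hsymm]
  have hexpand : ∑ k, ∑ l, w k l * (x k - x l) ^ 2
      = ∑ k, ∑ l, w k l * x k ^ 2 + ∑ k, ∑ l, w k l * x l ^ 2
        - 2 * ∑ k, ∑ l, w k l * (x k * x l) := by
    simp only [Finset.mul_sum, ← Finset.sum_add_distrib, ← Finset.sum_sub_distrib]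
    refine Finset.sum_congr rfl fun k _ => Finset.sum_congr rfl fun l _ => by ring
  have hform : x ⬝ᵥ ((diagonal d - of w) *ᵥ x)
      = ∑ k, ∑ l, w k l * x k ^ 2 - ∑ k, ∑ l, w k l * (x k * x l) := by
    simp only [dotProduct, laplacian_mulVec_apply, hd, Finset.sum_mul, Finset.mul_sum,
      ← Finset.sum_sub_distrib]
    refine Finset.sum_congr rfl fun k _ => Finset.sum_congr rfl fun l _ => by ring
  rw [hform, hexpand, hswap]
  ring

theorem eq_of_laplacian_mulVec_eq_zero (hsymm : ∀ i j, w i j = w j i) (hw : ∀ i j, 0 ≤ w i j)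
    (hd : ∀ i, d i = ∑ j, w i j) {x : ι → ℝ} (hx : (diagonal d - of w) *ᵥ x = 0) {a b : ι}
    (hab : Relation.ReflTransGen (fun a b => 0 < w a b) a b) : x a = x b := by
  have hterm_nonneg : ∀ k l, 0 ≤ w k l * (x k - x l) ^ 2 := fun k l =>
    mul_nonneg (hw k l) (sq_nonneg _)
  have hzero : ∑ k, ∑ l, w k l * (x k - x l) ^ 2 = 0 := by
    have := dotProduct_laplacian_mulVec hsymm hd x
    rw [hx, dotProduct_zero] at this
    linarith
  have hedge : ∀ k l, 0 < w k l → x k = x l := fun k l hkl => by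
    have hrow := (Finset.sum_eq_zero_iff_of_nonneg fun k _ =>
      Finset.sum_nonneg fun l _ => hterm_nonneg k l).1 hzero k (Finset.mem_univ k)
    have := (Finset.sum_eq_zero_iff_of_nonneg fun l _ => hterm_nonneg k l).1 hrow l
      (Finset.mem_univ l)
    have := (mul_eq_zero.1 this).resolve_left hkl.ne'
    exact sub_eq_zero.1 (pow_eq_zero_iff two_ne_zero |>.1 this)
  induction hab with
  | refl => rfl
  | tail _ hbc ih => exact ih.trans (hedge _ _ hbc)

theorem laplacian_mulVec_eq_sub_single (hsymm : ∀ i j, w i j = w j i)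
    (hd : ∀ i, d i = ∑ j, w i j) {f : ι → ℝ} {j : ι}
    (hf : ∀ k ≠ j, d k * f k = d k + ∑ l, w k l * f l) :
    (diagonal d - of w) *ᵥ f = d - (∑ k, d k) • Pi.single j 1 := by
  set r := (diagonal d - of w) *ᵥ f - d
  have hr : ∀ k ≠ j, r k = 0 := fun k hk => by
    simp only [r, Pi.sub_apply, laplacian_mulVec_apply, hf k hk]; ring
  have hrj : r j = -∑ k, d k := by
    rw [← Finset.sum_eq_single_of_mem j (Finset.mem_univ j) fun k _ hk => hr k hk]
    simp only [r, Pi.sub_apply, Finset.sum_sub_distrib, sum_laplacian_mulVec hsymm hd, zero_sub]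
  funext k
  rw [show (diagonal d - of w) *ᵥ f = d + r by simp [r]]
  by_cases hk : k = j
  · subst hk; simp [hrj, sub_eq_add_neg]
  · simp [hr k hk, hk]

end Laplacian

theorem sub_eq_mulVec_mulVec_sub_of_mul_mul_eq_self {m R : Type*} [Fintype m] [CommRing R]
    {L G : Matrix m m R} (hG : L * G * L = L) {a b : m}
    (hker : ∀ y, L *ᵥ y = 0 → y a = y b) (x : m → R) :
    x a - x b = (G *ᵥ (L *ᵥ x)) a - (G *ᵥ (L *ᵥ x)) b := by
  have h := hker (x - G *ᵥ (L *ᵥ x)) <| by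
    rw [mulVec_sub, mulVec_mulVec, mulVec_mulVec, hG, sub_self]
  simp only [Pi.sub_apply] at h
  linear_combination h

theorem commute_time_pseudoinverse_formula_general {n : ℕ} (w : Fin n → Fin n → ℝ)
    (hsymm : ∀ i j, w i j = w j i) (hnonneg : ∀ i j, 0 ≤ w i j)
    (hconn : ∀ i j : Fin n, Relation.ReflTransGen (fun a b => 0 < w a b) i j)
    (d : Fin n → ℝ) (hd : ∀ i, d i = ∑ j, w i j) (hdpos : ∀ i, 0 < d i)
    (p : Fin n → Fin n → ℝ) (hp : ∀ i l, p i l = w i l / d i)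
    (c : Fin n → Fin n → ℝ)
    (hc : ∀ i j, c i j = hittingTime p i j + hittingTime p j i)
    (L : Matrix (Fin n) (Fin n) ℝ) (hL : L = Matrix.diagonal d - Matrix.of w)
    (VG : ℝ) (hVG : VG = ∑ i, d i)
    (Lp : Matrix (Fin n) (Fin n) ℝ)
    (hmp1 : L * Lp * L = L) :
    ∀ i j, c i j =
      VG * ((Pi.single i 1 - Pi.single j 1) ⬝ᵥ
        (Lp *ᵥ (Pi.single i 1 - Pi.single j 1))) := by
  subst hL
  have hp0 : ∀ a b, 0 ≤ p a b := fun a b => hp a b ▸ div_nonneg (hnonneg a b) (hdpos a).le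
  have hp1 : ∀ a, ∑ b, p a b = 1 := fun a => by
    simp only [hp, ← Finset.sum_div, ← hd, div_self (hdpos a).ne']
  have hreach : ∀ a b, Relation.ReflTransGen (fun x y => 0 < p x y) a b := fun a b =>
    Relation.ReflTransGen.mono (fun x y hxy => hp x y ▸ div_pos hxy (hdpos x)) a b (hconn a b)
  have hhit : ∀ a b, hittingTime p a b
      = (Lp *ᵥ (d - VG • Pi.single b 1)) a - (Lp *ᵥ (d - VG • Pi.single b 1)) b := by
    intro a b
    have hrec : ∀ k ≠ b, d k * hittingTime p k b = d k + ∑ l, w k l * hittingTime p l b :=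
      fun k hk => by
        rw [hittingTime_eq_one_add hp0 hp1 (hreach · b) hk, mul_add, mul_one, Finset.mul_sum]
        simp only [hp, ← mul_assoc, mul_div_cancel₀ _ (hdpos k).ne']
    have hker : ∀ y, (diagonal d - of w) *ᵥ y = 0 → y a = y b := fun y hy =>
      eq_of_laplacian_mulVec_eq_zero hsymm hnonneg hd hy (hconn a b)
    rw [hVG, ← laplacian_mulVec_eq_sub_single hsymm hd hrec,
      ← sub_eq_mulVec_mulVec_sub_of_mul_mul_eq_self hmp1 hker, hittingTime_self, sub_zero]
  intro i j
  rw [hc, hhit, hhit]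
  simp [mulVec_sub, mulVec_smul, sub_dotProduct]
  ring

/-- For a connected weighted graph with Laplacian `L = D - A`, volume
`V_G = ∑ d i` and Moore–Penrose pseudoinverse `L⁺`, the commute time satisfies
`c i j = V_G * (e_i - e_j)ᵀ L⁺ (e_i - e_j)`. -/
theorem commute_time_pseudoinverse_formula {n : ℕ} (w : Fin n → Fin n → ℝ)
    (hsymm : ∀ i j, w i j = w j i) (hnonneg : ∀ i j, 0 ≤ w i j)
    (hconn : ∀ i j : Fin n, Relation.ReflTransGen (fun a b => 0 < w a b) i j)
    (d : Fin n → ℝ) (hd : ∀ i, d i = ∑ j, w i j) (hdpos : ∀ i, 0 < d i)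
    (p : Fin n → Fin n → ℝ) (hp : ∀ i l, p i l = w i l / d i)
    (c : Fin n → Fin n → ℝ)
    (hc : ∀ i j, c i j = hittingTime p i j + hittingTime p j i)
    (L : Matrix (Fin n) (Fin n) ℝ) (hL : L = Matrix.diagonal d - Matrix.of w)
    (VG : ℝ) (hVG : VG = ∑ i, d i)
    (Lp : Matrix (Fin n) (Fin n) ℝ)
    (hmp1 : L * Lp * L = L) (hmp2 : Lp * L * Lp = Lp)
    (hmp3 : (L * Lp)ᵀ = L * Lp) (hmp4 : (Lp * L)ᵀ = Lp * L) :
    ∀ i j, c i j =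
      VG * ((Pi.single i 1 - Pi.single j 1) ⬝ᵥ
        (Lp *ᵥ (Pi.single i 1 - Pi.single j 1))) :=
  commute_time_pseudoinverse_formula_general w hsymm hnonneg hconn d hd hdpos p hp c hc L hL VG hVG
    Lp hmp1
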